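/- Let m and K be positive integers, a₁, …, a_K ∈ ℝ^m, b ∈ ℝ^K, ξ⁰ ∈ ℝ^m, θ ≥ 0, let p ∈ [1, ∞], and let q be the Hölder conjugate of p (1/p + 1/q = 1, with q = ∞ when p = 1 and q = 1 when p = ∞). Then min_{ξ : ‖ξ−ξ⁰‖_p ≤ θ} max_{k∈[K]} ( ξᵀ a_k + b_k ) = max_{λ ∈ Δ_K} ( Σ_{k∈[K]} λ_k ( (ξ⁰)ᵀ a_k + b_k ) − θ ‖ Σ_{k∈[K]} λ_k a_k ‖_q ), where Δ_K = {λ ∈ ℝ^K : λ ≥ 0, Σ_k λ_k = 1} is the probability simplex, and both optima are attained. -/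

import Mathlib

open scoped ENNReal

noncomputable def pnorm (p : ℝ≥0∞) [Fact (1 ≤ p)] {m : ℕ} (v : Fin m → ℝ) : ℝ :=
  ‖(WithLp.equiv p (Fin m → ℝ)).symm v‖

variable {m : ℕ} {p q : ℝ≥0∞} [Fact (1 ≤ p)] [Fact (1 ≤ q)]

lemma pnorm_nonneg (v : Fin m → ℝ) : 0 ≤ pnorm p v := norm_nonneg _

lemma pnorm_eq_sum (hp : p ≠ ∞) (v : Fin m → ℝ) :
    pnorm p v = (∑ j, |v j| ^ p.toReal) ^ (1 / p.toReal) := by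
  have h0 : 0 < p.toReal := ENNReal.toReal_pos (zero_lt_one.trans_le (Fact.out : 1 ≤ p)).ne' hp
  rw [pnorm, PiLp.norm_eq_sum h0]
  simp [Real.norm_eq_abs]

lemma pnorm_top_eq (v : Fin m → ℝ) : pnorm ∞ v = ⨆ j, |v j| := by
  rw [pnorm, PiLp.norm_eq_ciSup]
  simp [Real.norm_eq_abs]

lemma pnorm_one_eq (v : Fin m → ℝ) : pnorm 1 v = ∑ j, |v j| := by
  rw [pnorm_eq_sum (by simp)]; simp

lemma abs_le_pnorm_top (v : Fin m → ℝ) (j : Fin m) : |v j| ≤ pnorm ∞ v := by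
  rw [pnorm_top_eq]
  exact le_ciSup (f := fun j => |v j|) (Finite.bddAbove_range _) j

lemma pnorm_smul (t : ℝ) (v : Fin m → ℝ) : pnorm p (t • v) = |t| * pnorm p v := by
  have : (WithLp.equiv p (Fin m → ℝ)).symm (t • v) = t • ((WithLp.equiv p (Fin m → ℝ)).symm v) := rfl
  rw [pnorm, pnorm, this, norm_smul, Real.norm_eq_abs]

lemma pnorm_neg (v : Fin m → ℝ) : pnorm p (-v) = pnorm p v := by
  have : (WithLp.equiv p (Fin m → ℝ)).symm (-v) = -((WithLp.equiv p (Fin m → ℝ)).symm v) := rfl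
  rw [pnorm, pnorm, this, norm_neg]


lemma conj_trichotomy {p q : ℝ≥0∞} (h : 1/p + 1/q = 1) (hp : 1 ≤ p) (hq : 1 ≤ q) :
    (p = 1 ∧ q = ∞) ∨ (p = ∞ ∧ q = 1) ∨
    (p ≠ ∞ ∧ q ≠ ∞ ∧ p.toReal.HolderConjugate q.toReal) := by
  have hc : p⁻¹ + q⁻¹ = 1 := by simpa [one_div] using h
  rcases eq_or_ne p 1 with rfl | hp1
  · left
    refine ⟨rfl, ?_⟩
    have := hc
    simp at this
    have hq0 : q⁻¹ = 0 := by
      by_contra hne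
      exact hne ((ENNReal.add_right_inj (a := (1:ℝ≥0∞)) (by simp)).1 (by simp [this]))
    simpa [ENNReal.inv_eq_zero] using hq0
  rcases eq_or_ne p ∞ with rfl | hptop
  · right; left
    have := hc
    simp at this
    exact ⟨rfl, by simpa [ENNReal.inv_eq_one] using this⟩
  · right; right
    have hp1' : 1 < p := lt_of_le_of_ne hp (Ne.symm hp1)
    have hq1 : q ≠ 1 := by
      rintro rfl
      have := hc
      simp at this
      have hp0 : p⁻¹ = 0 := by
        by_contra hne
        exact hne ((ENNReal.add_right_inj (a := (1:ℝ≥0∞)) (by simp)).1 (by simp [this]))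
      exact hptop (by simpa [ENNReal.inv_eq_zero] using hp0)
    have hqtop : q ≠ ∞ := by
      rintro rfl
      have := hc
      simp [ENNReal.inv_eq_one] at this
      exact hp1 this
    refine ⟨hptop, hqtop, Real.holderConjugate_iff.2 ⟨?_, ?_⟩⟩
    · have : 1 < p.toReal := by
        rw [← ENNReal.toReal_one]
        exact (ENNReal.toReal_lt_toReal (by simp) hptop).2 hp1'
      exact this
    · have := hc
      have h1 : (p⁻¹ + q⁻¹).toReal = 1 := by rw [this]; simp
      rw [ENNReal.toReal_add (by simp [(zero_lt_one.trans_le hp).ne']) (by simp [(zero_lt_one.trans_le hq).ne'])] at h1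
      rw [ENNReal.toReal_inv, ENNReal.toReal_inv] at h1
      simpa [one_div] using h1

lemma dual_bound (hpq : 1/p + 1/q = 1) (u c : Fin m → ℝ) :
    ∑ j, u j * c j ≤ pnorm p u * pnorm q c := by
  rcases conj_trichotomy hpq (Fact.out) (Fact.out) with ⟨rfl, rfl⟩ | ⟨rfl, rfl⟩ | ⟨hpt, hqt, hc⟩
  · rw [pnorm_one_eq]
    calc ∑ j, u j * c j ≤ ∑ j, |u j| * pnorm ∞ c := by
          apply Finset.sum_le_sum
          intro j _
          calc u j * c j ≤ |u j * c j| := le_abs_self _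
            _ = |u j| * |c j| := abs_mul _ _
            _ ≤ |u j| * pnorm ∞ c := by
                exact mul_le_mul_of_nonneg_left (abs_le_pnorm_top c j) (abs_nonneg _)
      _ = (∑ j, |u j|) * pnorm ∞ c := by rw [Finset.sum_mul]
  · rw [pnorm_one_eq]
    calc ∑ j, u j * c j ≤ ∑ j, pnorm ∞ u * |c j| := by
          apply Finset.sum_le_sum
          intro j _
          calc u j * c j ≤ |u j * c j| := le_abs_self _
            _ = |u j| * |c j| := abs_mul _ _
            _ ≤ pnorm ∞ u * |c j| := by
                exact mul_le_mul_of_nonneg_right (abs_le_pnorm_top u j) (abs_nonneg _)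
      _ = pnorm ∞ u * (∑ j, |c j|) := by rw [Finset.mul_sum]
  · rw [pnorm_eq_sum hpt, pnorm_eq_sum hqt]
    exact Real.inner_le_Lp_mul_Lq Finset.univ u c hc

lemma sign_mul_self_eq_abs (x : ℝ) : Real.sign x * x = |x| := by
  rcases lt_trichotomy x 0 with h | h | h
  · rw [Real.sign_of_neg h, abs_of_neg h]; ring
  · simp [h]
  · rw [Real.sign_of_pos h, abs_of_pos h]; ring

lemma abs_sign_le_one (x : ℝ) : |Real.sign x| ≤ 1 := by
  rcases lt_trichotomy x 0 with h | h | h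
  · rw [Real.sign_of_neg h]; simp
  · simp [h]
  · rw [Real.sign_of_pos h]; simp

lemma dual_attain (hpq : 1/p + 1/q = 1) (hm : 0 < m) (c : Fin m → ℝ) :
    ∃ u : Fin m → ℝ, pnorm p u ≤ 1 ∧ ∑ j, u j * c j = pnorm q c := by
  haveI : Nonempty (Fin m) := ⟨⟨0, hm⟩⟩
  rcases conj_trichotomy hpq (Fact.out) (Fact.out) with ⟨rfl, rfl⟩ | ⟨rfl, rfl⟩ | ⟨hpt, hqt, hc⟩
  · -- p = 1, q = ∞
    obtain ⟨j0, hj0⟩ := Finite.exists_max (fun j => |c j|)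
    refine ⟨fun j => if j = j0 then Real.sign (c j0) else 0, ?_, ?_⟩
    · rw [pnorm_one_eq]
      calc (∑ j, |if j = j0 then Real.sign (c j0) else 0|)
          = |Real.sign (c j0)| := by
            rw [Finset.sum_eq_single j0]
            · simp
            · intro j _ hj; simp [hj]
            · simp
        _ ≤ 1 := abs_sign_le_one _
    · rw [pnorm_top_eq]
      have h1 : (∑ j, (if j = j0 then Real.sign (c j0) else 0) * c j)
          = Real.sign (c j0) * c j0 := by
        rw [Finset.sum_eq_single j0]
        · simp
        · intro j _ hj; simp [hj]
        · simp
      rw [h1, sign_mul_self_eq_abs]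
      exact le_antisymm (le_ciSup (f := fun j => |c j|) (Finite.bddAbove_range _) j0)
        (ciSup_le hj0)
  · -- p = ∞, q = 1
    refine ⟨fun j => Real.sign (c j), ?_, ?_⟩
    · rw [pnorm_top_eq]
      exact ciSup_le fun j => abs_sign_le_one _
    · rw [pnorm_one_eq]
      exact Finset.sum_congr rfl fun j _ => sign_mul_self_eq_abs _
  · -- finite case
    set pr := p.toReal with hpr
    set qr := q.toReal with hqr
    have hpr1 : 1 < pr := hc.lt
    have hqr1 : 1 < qr := hc.symm.lt
    have hprne : pr ≠ 0 := by positivity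
    have hqrne : qr ≠ 0 := by positivity
    by_cases hc0 : c = 0
    · refine ⟨0, ?_, ?_⟩
      · rw [pnorm_eq_sum hpt]
        simp [Real.zero_rpow hprne, Real.zero_rpow (by positivity : (1:ℝ)/pr ≠ 0),
          Real.zero_rpow (show p.toReal⁻¹ ≠ 0 by positivity), Real.zero_rpow (show p.toReal ≠ 0 from hprne)]
      · rw [pnorm_eq_sum hqt, hc0]
        simp [Real.zero_rpow hqrne, Real.zero_rpow (by positivity : (1:ℝ)/qr ≠ 0),
          Real.zero_rpow (show q.toReal⁻¹ ≠ 0 by positivity), Real.zero_rpow (show q.toReal ≠ 0 from hqrne)]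
    · obtain ⟨j1, hj1⟩ : ∃ j, c j ≠ 0 := by
        by_contra hall; push_neg at hall; exact hc0 (funext hall)
      set S := ∑ j, |c j| ^ qr with hS
      have hSpos : 0 < S := by
        apply Finset.sum_pos' (fun j _ => by positivity)
        exact ⟨j1, Finset.mem_univ _, by positivity⟩
      set N := S ^ (1/qr) with hN
      have hNpos : 0 < N := by positivity
      have hNq : N ^ qr = S := by
        rw [hN, ← Real.rpow_mul hSpos.le, one_div, inv_mul_cancel₀ hqrne, Real.rpow_one]
      have hkey : (qr - 1) * pr = qr := hc.symm.sub_one_mul_conj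
      refine ⟨fun j => Real.sign (c j) * |c j| ^ (qr - 1) / N ^ (qr - 1), ?_, ?_⟩
      · -- pnorm p u = 1
        have habs : ∀ j, |Real.sign (c j) * |c j| ^ (qr - 1) / N ^ (qr - 1)|
            = |c j| ^ (qr - 1) / N ^ (qr - 1) := by
          intro j
          rw [abs_div, abs_mul, abs_of_nonneg (by positivity : (0:ℝ) ≤ |c j| ^ (qr-1)),
            abs_of_nonneg (by positivity : (0:ℝ) ≤ N ^ (qr-1))]
          by_cases hj : c j = 0
          · simp [hj, Real.zero_rpow (by linarith : qr - 1 ≠ 0)]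
          · rcases lt_or_gt_of_ne hj with h | h
            · rw [Real.sign_of_neg h]; simp
            · rw [Real.sign_of_pos h]; simp
        have hpow : ∀ j, (|c j| ^ (qr - 1) / N ^ (qr - 1)) ^ pr = |c j| ^ qr / N ^ qr := by
          intro j
          rw [Real.div_rpow (by positivity) (by positivity),
            ← Real.rpow_mul (abs_nonneg _), ← Real.rpow_mul hNpos.le, hkey]
        rw [pnorm_eq_sum hpt]
        have : ∑ j, |Real.sign (c j) * |c j| ^ (qr - 1) / N ^ (qr - 1)| ^ pr = 1 := by
          calc ∑ j, |Real.sign (c j) * |c j| ^ (qr - 1) / N ^ (qr - 1)| ^ pr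
              = ∑ j, |c j| ^ qr / N ^ qr := by
                refine Finset.sum_congr rfl fun j _ => ?_
                rw [habs j, hpow j]
            _ = S / N ^ qr := by rw [← Finset.sum_div]
            _ = 1 := by rw [hNq, div_self hSpos.ne']
        rw [this, Real.one_rpow]
      · -- sum u c = N
        have hterm : ∀ j, (Real.sign (c j) * |c j| ^ (qr - 1) / N ^ (qr - 1)) * c j
            = |c j| ^ qr / N ^ (qr - 1) := by
          intro j
          have : Real.sign (c j) * |c j| ^ (qr - 1) / N ^ (qr - 1) * c j
              = (|c j| ^ (qr - 1) * (Real.sign (c j) * c j)) / N ^ (qr - 1) := by ring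
          rw [this, sign_mul_self_eq_abs]
          congr 1
          by_cases hj : c j = 0
          · simp [hj, Real.zero_rpow (by linarith : qr - 1 ≠ 0),
              Real.zero_rpow hqrne]
          · rw [← Real.rpow_add_one (abs_ne_zero.2 hj) (qr - 1)]
            ring_nf
        have hsum : ∑ j, (Real.sign (c j) * |c j| ^ (qr - 1) / N ^ (qr - 1)) * c j = N := by
          calc ∑ j, (Real.sign (c j) * |c j| ^ (qr - 1) / N ^ (qr - 1)) * c j
              = ∑ j, |c j| ^ qr / N ^ (qr - 1) :=
                Finset.sum_congr rfl fun j _ => hterm j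
            _ = S / N ^ (qr - 1) := by rw [hS, Finset.sum_div]
            _ = N ^ qr / N ^ (qr - 1) := by rw [hNq]
            _ = N := by
                rw [← Real.rpow_sub hNpos]
                simp
        rw [hsum, pnorm_eq_sum hqt, ← hS, ← hN]

lemma pnorm_zero : pnorm p (0 : Fin m → ℝ) = 0 := by
  have : (WithLp.equiv p (Fin m → ℝ)).symm (0 : Fin m → ℝ) = 0 := rfl
  rw [pnorm, this, norm_zero]

lemma pnorm_add_le (x y : Fin m → ℝ) : pnorm p (x + y) ≤ pnorm p x + pnorm p y := by
  have : (WithLp.equiv p (Fin m → ℝ)).symm (x + y)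
      = (WithLp.equiv p (Fin m → ℝ)).symm x + (WithLp.equiv p (Fin m → ℝ)).symm y := rfl
  rw [pnorm, this]
  exact norm_add_le _ _

lemma neg_combo {x y α β : ℝ} (hx : x < 0) (hy : y < 0) (hα : 0 ≤ α) (hβ : 0 ≤ β)
    (hab : α + β = 1) : α * x + β * y < 0 := by
  rcases eq_or_lt_of_le hα with h | h
  · have hb1 : β = 1 := by linarith
    rw [← h, hb1]; simpa
  · nlinarith [mul_neg_of_pos_of_neg h hx, mul_nonpos_of_nonneg_of_nonpos hβ hy.le]

lemma shift_sum {m K : ℕ} (a : Fin K → Fin m → ℝ) (b : Fin K → ℝ) (lam : Fin K → ℝ)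
    (ξ ζ : Fin m → ℝ) :
    ∑ k, lam k * ((∑ j, ξ j * a k j) + b k)
      = (∑ k, lam k * ((∑ j, ζ j * a k j) + b k))
        + ∑ j, (ξ - ζ) j * (∑ k, lam k • a k) j := by
  have hc : ∀ j, (∑ k, lam k • a k) j = ∑ k, lam k * a k j := by
    intro j; simp [Finset.sum_apply]
  have hswap : ∑ j, (ξ - ζ) j * (∑ k, lam k • a k) j
      = ∑ k, lam k * ∑ j, (ξ - ζ) j * a k j := by
    calc ∑ j, (ξ - ζ) j * (∑ k, lam k • a k) j
        = ∑ j, ∑ k, (ξ - ζ) j * (lam k * a k j) := by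
          refine Finset.sum_congr rfl fun j _ => ?_
          rw [hc j, Finset.mul_sum]
      _ = ∑ k, ∑ j, (ξ - ζ) j * (lam k * a k j) := Finset.sum_comm
      _ = ∑ k, lam k * ∑ j, (ξ - ζ) j * a k j := by
          refine Finset.sum_congr rfl fun k _ => ?_
          rw [Finset.mul_sum]
          refine Finset.sum_congr rfl fun j _ => by ring
  rw [hswap, ← Finset.sum_add_distrib]
  refine Finset.sum_congr rfl fun k _ => ?_
  have : ∑ j, (ξ - ζ) j * a k j = (∑ j, ξ j * a k j) - ∑ j, ζ j * a k j := by
    rw [← Finset.sum_sub_distrib]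
    exact Finset.sum_congr rfl fun j _ => by simp [Pi.sub_apply]; ring
  rw [this]; ring

/-- Sion minimax / dual norm reformulation:
`min_{‖ξ−ξ⁰‖_p ≤ θ} max_k (ξᵀ a_k + b_k)
  = max_{λ ∈ Δ_K} (∑_k λ_k ((ξ⁰)ᵀ a_k + b_k) − θ‖∑_k λ_k a_k‖_q)`,
with `q` the Hölder conjugate of `p`, and both optima are attained. -/
theorem sdfo_convex_minimax_reformulation {m K : ℕ} (hm : 0 < m) (hK : 0 < K)
    (a : Fin K → Fin m → ℝ) (b : Fin K → ℝ) (ξ0 : Fin m → ℝ) (θ : ℝ) (hθ : 0 ≤ θ)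
    (p q : ℝ≥0∞) [Fact (1 ≤ p)] [Fact (1 ≤ q)] (hpq : 1 / p + 1 / q = 1) :
    ∃ v : ℝ,
      IsLeast {r : ℝ | ∃ ξ : Fin m → ℝ, pnorm p (ξ - ξ0) ≤ θ ∧
        r = ⨆ k : Fin K, ((∑ j, ξ j * a k j) + b k)} v ∧
      IsGreatest {r : ℝ | ∃ lam : Fin K → ℝ, (∀ k, 0 ≤ lam k) ∧ (∑ k, lam k) = 1 ∧
        r = (∑ k, lam k * ((∑ j, ξ0 j * a k j) + b k)) -
          θ * pnorm q (∑ k, lam k • a k)} v := by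
  haveI : Nonempty (Fin K) := ⟨⟨0, hK⟩⟩
  set F : (Fin m → ℝ) → Fin K → ℝ := fun ξ k => (∑ j, ξ j * a k j) + b k with hF
  set h : (Fin m → ℝ) → ℝ := fun ξ => ⨆ k, F ξ k with hh
  set B : Set (Fin m → ℝ) := {ξ | pnorm p (ξ - ξ0) ≤ θ} with hB
  -- compactness of B
  have hBeq : B = (WithLp.equiv p (Fin m → ℝ)) ''
      Metric.closedBall ((WithLp.equiv p (Fin m → ℝ)).symm ξ0) θ := by
    ext ξ
    simp only [hB, Set.mem_setOf_eq, Set.mem_image, Metric.mem_closedBall]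
    constructor
    · intro hξ
      exact ⟨(WithLp.equiv p (Fin m → ℝ)).symm ξ, by rw [dist_eq_norm]; exact hξ, rfl⟩
    · rintro ⟨x, hx, rfl⟩
      rw [dist_eq_norm] at hx
      exact hx
  have hBcomp : IsCompact B := by
    rw [hBeq]
    exact (isCompact_closedBall _ _).image (PiLp.continuous_ofLp _ _)
  have hBne : B.Nonempty := by
    refine ⟨ξ0, ?_⟩
    show pnorm p (ξ0 - ξ0) ≤ θ
    rw [sub_self, pnorm_zero]
    exact hθ
  have hcontF : ∀ k, Continuous (fun ξ : Fin m → ℝ => F ξ k) := by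
    intro k
    exact (continuous_finset_sum _ fun j _ => (continuous_apply j).mul continuous_const).add
      continuous_const
  have hconth : Continuous h := by
    have : h = fun ξ => Finset.univ.sup' Finset.univ_nonempty (fun k => F ξ k) := by
      funext ξ
      rw [hh, Finset.sup'_univ_eq_ciSup]
    rw [this]
    exact Continuous.finset_sup'_apply Finset.univ_nonempty fun k _ => hcontF k
  obtain ⟨ξs, hξsB, hmin⟩ := hBcomp.exists_isMinOn hBne hconth.continuousOn
  set v := h ξs with hv
  have hmin' : ∀ ξ ∈ B, v ≤ h ξ := fun ξ hξ => hmin hξ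
  -- convex combination ≤ sup
  have hcombo : ∀ (lam : Fin K → ℝ), (∀ k, 0 ≤ lam k) → (∑ k, lam k) = 1 →
      ∀ ξ, ∑ k, lam k * F ξ k ≤ h ξ := by
    intro lam hl hs ξ
    have hb : ∀ k, F ξ k ≤ h ξ := fun k =>
      le_ciSup (f := fun k => F ξ k) (Finite.bddAbove_range _) k
    calc ∑ k, lam k * F ξ k ≤ ∑ k, lam k * h ξ :=
          Finset.sum_le_sum fun k _ => mul_le_mul_of_nonneg_left (hb k) (hl k)
      _ = h ξ := by rw [← Finset.sum_mul, hs, one_mul]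
  -- weak duality
  have hweak : ∀ (lam : Fin K → ℝ), (∀ k, 0 ≤ lam k) → (∑ k, lam k) = 1 →
      (∑ k, lam k * F ξ0 k) - θ * pnorm q (∑ k, lam k • a k) ≤ v := by
    intro lam hl hs
    set c := ∑ k, lam k • a k with hcdef
    have key1 : ∑ k, lam k * F ξ0 k
        = (∑ k, lam k * F ξs k) + ∑ j, (ξ0 - ξs) j * c j := shift_sum a b lam ξ0 ξs
    have key2 : ∑ j, (ξ0 - ξs) j * c j ≤ θ * pnorm q c := by
      have h1 := dual_bound hpq (ξ0 - ξs) c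
      have h2 : pnorm p (ξ0 - ξs) ≤ θ := by
        have : ξ0 - ξs = -(ξs - ξ0) := by ring
        rw [this, pnorm_neg]
        exact hξsB
      calc ∑ j, (ξ0 - ξs) j * c j ≤ pnorm p (ξ0 - ξs) * pnorm q c := h1
        _ ≤ θ * pnorm q c := mul_le_mul_of_nonneg_right h2 (pnorm_nonneg c)
    have key3 : ∑ k, lam k * F ξs k ≤ v := hcombo lam hl hs ξs
    linarith
  refine ⟨v, ⟨⟨ξs, hξsB, rfl⟩, ?_⟩, ?_⟩
  · rintro r ⟨ξ, hξ, rfl⟩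
    exact hmin' ξ hξ
  -- strong duality via separation
  set s : Set (Fin K → ℝ) := {y | ∀ k, y k < 0} with hsdef
  set t : Set (Fin K → ℝ) := {y | ∃ ξ ∈ B, ∀ k, F ξ k - v ≤ y k} with htdef
  have hs_open : IsOpen s := by
    have : s = ⋂ k, (fun y : Fin K → ℝ => y k) ⁻¹' Set.Iio 0 := by
      ext y; simp [hsdef]
    rw [this]
    exact isOpen_iInter_of_finite fun k => (continuous_apply k).isOpen_preimage _ isOpen_Iio
  have hs_conv : Convex ℝ s := by
    intro y1 h1 y2 h2 α β hα hβ hab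
    intro k
    have : (α • y1 + β • y2) k = α * y1 k + β * y2 k := by simp
    rw [Set.mem_setOf_eq] at h1 h2
    exact this ▸ neg_combo (h1 k) (h2 k) hα hβ hab
  have ht_conv : Convex ℝ t := by
    rintro y1 ⟨ξ1, hb1, hy1⟩ y2 ⟨ξ2, hb2, hy2⟩ α β hα hβ hab
    refine ⟨α • ξ1 + β • ξ2, ?_, ?_⟩
    · have heq : α • ξ1 + β • ξ2 - ξ0 = α • (ξ1 - ξ0) + β • (ξ2 - ξ0) := by
        funext j
        have hb' : β = 1 - α := by linarith
        simp [hb']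
        ring
      show pnorm p (α • ξ1 + β • ξ2 - ξ0) ≤ θ
      rw [heq]
      calc pnorm p (α • (ξ1 - ξ0) + β • (ξ2 - ξ0))
          ≤ pnorm p (α • (ξ1 - ξ0)) + pnorm p (β • (ξ2 - ξ0)) := pnorm_add_le _ _
        _ = α * pnorm p (ξ1 - ξ0) + β * pnorm p (ξ2 - ξ0) := by
            rw [pnorm_smul, pnorm_smul, abs_of_nonneg hα, abs_of_nonneg hβ]
        _ ≤ α * θ + β * θ := by
            gcongr
            exacts [hb1, hb2]
        _ = θ := by rw [← add_mul, hab, one_mul]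
    · intro k
      have hsum : ∑ j, (α • ξ1 + β • ξ2) j * a k j
          = α * (∑ j, ξ1 j * a k j) + β * (∑ j, ξ2 j * a k j) := by
        rw [Finset.mul_sum, Finset.mul_sum, ← Finset.sum_add_distrib]
        refine Finset.sum_congr rfl fun j _ => ?_
        simp
        ring
      have e1 : F ξ1 k - v ≤ y1 k := hy1 k
      have e2 : F ξ2 k - v ≤ y2 k := hy2 k
      have hFc : F (α • ξ1 + β • ξ2) k = α * F ξ1 k + β * F ξ2 k := by
        simp only [hF, hsum]
        have : b k = (α + β) * b k := by rw [hab, one_mul]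
        nlinarith [this]
      have hyc : (α • y1 + β • y2) k = α * y1 k + β * y2 k := by simp
      rw [hFc, hyc]
      have p1 := mul_le_mul_of_nonneg_left e1 hα
      have p2 := mul_le_mul_of_nonneg_left e2 hβ
      rw [mul_sub] at p1 p2
      have hv' : α * v + β * v = v := by rw [← add_mul, hab, one_mul]
      linarith
  have hdisj : Disjoint s t := by
    rw [Set.disjoint_left]
    rintro y hys ⟨ξ, hξB, hle⟩
    obtain ⟨k0, hk0⟩ := Finite.exists_max (fun k => F ξ k)
    have h1 : v ≤ h ξ := hmin' ξ hξB
    have h2 : h ξ ≤ F ξ k0 := ciSup_le hk0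
    have h3 : F ξ k0 - v ≤ y k0 := hle k0
    have h4 : y k0 < 0 := hys k0
    linarith
  obtain ⟨φ, u, hφs, hφt⟩ := geometric_hahn_banach_open hs_conv hs_open ht_conv hdisj
  set lam : Fin K → ℝ := fun k => φ (Pi.single k 1) with hlam
  have hrep : ∀ y : Fin K → ℝ, φ y = ∑ k, y k * lam k := by
    intro y
    have hy : y = ∑ k, y k • (Pi.single k (1:ℝ) : Fin K → ℝ) := by
      have : ∀ k, y k • (Pi.single k (1:ℝ) : Fin K → ℝ) = (Pi.single k (y k) : Fin K → ℝ) := by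
        intro k
        rw [← Pi.single_smul, smul_eq_mul, mul_one]
      rw [Finset.sum_congr rfl fun k _ => this k, Finset.univ_sum_single]
    conv_lhs => rw [hy]
    rw [map_sum]
    exact Finset.sum_congr rfl fun k _ => by rw [map_smul, smul_eq_mul]
  have hconst : ∀ r : ℝ, φ (fun _ => r) = r * ∑ k, lam k := by
    intro r
    rw [hrep]
    rw [Finset.mul_sum]
  have hlamnn : ∀ k, 0 ≤ lam k := by
    intro k
    by_contra hneg
    push_neg at hneg
    set tt := max 1 ((u - φ (fun _ => (-1:ℝ)) + 1) / (-lam k)) with htt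
    have htt1 : (1:ℝ) ≤ tt := le_max_left _ _
    set y : Fin K → ℝ := (fun _ => (-1:ℝ)) - tt • (Pi.single k (1:ℝ) : Fin K → ℝ) with hy
    have hys : y ∈ s := by
      intro k'
      simp only [hy, Pi.sub_apply, Pi.smul_apply, smul_eq_mul]
      rcases eq_or_ne k' k with rfl | hne
      · simp only [Pi.single_eq_same, mul_one]
        linarith
      · rw [Pi.single_eq_of_ne hne]
        simp
    have hφy : φ y = φ (fun _ => (-1:ℝ)) - tt * lam k := by
      rw [hy, map_sub, map_smul, smul_eq_mul]
    have hlt := hφs y hys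
    have hpos : 0 < -lam k := by linarith
    have hge : u - φ (fun _ => (-1:ℝ)) + 1 ≤ tt * (-lam k) :=
      (div_le_iff₀ hpos).1 (le_max_right _ _)
    rw [hφy] at hlt
    nlinarith
  have htne : (fun k => F ξs k - v) ∈ t := ⟨ξs, hξsB, fun k => le_refl _⟩
  have huz : u ≤ φ (fun k => F ξs k - v) := hφt _ htne
  have hLpos : 0 < ∑ k, lam k := by
    rcases eq_or_lt_of_le (Finset.sum_nonneg fun k _ => hlamnn k) with h | h
    · exfalso
      have hall : ∀ k, lam k = 0 := by
        intro k
        have := (Finset.sum_eq_zero_iff_of_nonneg fun k _ => hlamnn k).1 h.symm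
        exact this k (Finset.mem_univ k)
      have h1 : φ (fun k => F ξs k - v) = 0 := by
        rw [hrep]
        simp [hall]
      have h2 := hφs (fun _ => (-1:ℝ)) (fun k => by norm_num)
      rw [hconst] at h2
      have hLz : ∑ k, lam k = 0 := h.symm
      rw [hLz] at h2
      simp at h2
      linarith [huz, h1 ▸ huz]
    · exact h
  have hu0 : 0 ≤ u := by
    by_contra hu
    push_neg at hu
    set L := ∑ k, lam k with hL
    set ε := (-u) / (L + 1) with hε
    have hεpos : 0 < ε := div_pos (by linarith) (by linarith)
    have hmem : (fun _ : Fin K => -ε) ∈ s := fun k => by simp [neg_neg]; linarith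
    have hlt := hφs _ hmem
    rw [hconst] at hlt
    have h2 : (-u) / (L + 1) * (L + 1) = -u := div_mul_cancel₀ _ (by linarith)
    nlinarith [mul_lt_mul_of_pos_right hlt (show (0:ℝ) < L + 1 by linarith)]
  have hsep : ∀ ξ ∈ B, v * (∑ k, lam k) ≤ ∑ k, lam k * F ξ k := by
    intro ξ hξ
    have hmem : (fun k => F ξ k - v) ∈ t := ⟨ξ, hξ, fun k => le_refl _⟩
    have h1 := hφt _ hmem
    rw [hrep] at h1
    have h2 : ∑ k, (F ξ k - v) * lam k
        = (∑ k, lam k * F ξ k) - v * ∑ k, lam k := by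
      rw [Finset.mul_sum, ← Finset.sum_sub_distrib]
      exact Finset.sum_congr rfl fun k _ => by ring
    rw [h2] at h1
    linarith
  set L := ∑ k, lam k with hL
  set lams : Fin K → ℝ := fun k => lam k / L with hlams
  have hlamsnn : ∀ k, 0 ≤ lams k := fun k => div_nonneg (hlamnn k) hLpos.le
  have hlamssum : ∑ k, lams k = 1 := by
    rw [hlams, ← Finset.sum_div, div_self hLpos.ne']
  have hsep' : ∀ ξ ∈ B, v ≤ ∑ k, lams k * F ξ k := by
    intro ξ hξ
    have h1 := hsep ξ hξ
    have h2 : ∑ k, lams k * F ξ k = (∑ k, lam k * F ξ k) / L := by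
      rw [Finset.sum_div]
      exact Finset.sum_congr rfl fun k _ => by rw [hlams]; ring
    rw [h2, le_div_iff₀ hLpos]
    linarith [h1]
  -- attainment
  set c := ∑ k, lams k • a k with hcdef
  obtain ⟨u0, hu0le, hu0eq⟩ := dual_attain hpq hm c
  set ξd : Fin m → ℝ := ξ0 - θ • u0 with hξd
  have hξdB : ξd ∈ B := by
    show pnorm p (ξd - ξ0) ≤ θ
    have : ξd - ξ0 = (-θ) • u0 := by
      funext j; simp [hξd]
    rw [this, pnorm_smul, abs_neg, abs_of_nonneg hθ]
    calc θ * pnorm p u0 ≤ θ * 1 := mul_le_mul_of_nonneg_left hu0le hθ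
      _ = θ := mul_one θ
  have e1 : ∑ k, lams k * F ξ0 k
      = (∑ k, lams k * F ξd k) + ∑ j, (ξ0 - ξd) j * c j := shift_sum a b lams ξ0 ξd
  have e2 : ∑ j, (ξ0 - ξd) j * c j = θ * pnorm q c := by
    have hd : ∀ j, (ξ0 - ξd) j = θ * u0 j := by
      intro j; simp [hξd]
    calc ∑ j, (ξ0 - ξd) j * c j = ∑ j, θ * (u0 j * c j) := by
          refine Finset.sum_congr rfl fun j _ => ?_
          rw [hd j]; ring
      _ = θ * ∑ j, u0 j * c j := by rw [Finset.mul_sum]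
      _ = θ * pnorm q c := by rw [hu0eq]
  have hvals : (∑ k, lams k * F ξ0 k) - θ * pnorm q c = ∑ k, lams k * F ξd k := by
    rw [e1, e2]; ring
  have hge : v ≤ (∑ k, lams k * F ξ0 k) - θ * pnorm q c := by
    rw [hvals]
    exact hsep' ξd hξdB
  have hle : (∑ k, lams k * F ξ0 k) - θ * pnorm q c ≤ v := hweak lams hlamsnn hlamssum
  have heqv : (∑ k, lams k * F ξ0 k) - θ * pnorm q c = v := le_antisymm hle hge
  constructor
  · exact ⟨lams, hlamsnn, hlamssum, heqv.symm⟩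
  · rintro r ⟨lam', h1, h2, rfl⟩
    exact hweak lam' h1 h2
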